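/- Suppose k ≥ 2 and k < m < 2k, and n > k. In any fault-free tiling of an m×n rectangle by k×1 tiles, the first column contains exactly one vertical tile. -/

import Mathlib

/-- The cells of an `m × n` rectangle: `(row, column)` with `row < m`, `column < n`. -/
def grid (m n : ℕ) : Finset (ℕ × ℕ) := Finset.range m ×ˢ Finset.range n

/-- A horizontal `k × 1` tile: `k` consecutive cells in one row. -/
def IsHTile (k : ℕ) (t : Finset (ℕ × ℕ)) : Prop :=
  ∃ i j : ℕ, t = (Finset.range k).image fun s => (i, j + s)

/-- A vertical `k × 1` tile: `k` consecutive cells in one column. -/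
def IsVTile (k : ℕ) (t : Finset (ℕ × ℕ)) : Prop :=
  ∃ i j : ℕ, t = (Finset.range k).image fun s => (i + s, j)

/-- A tiling of the `m × n` rectangle by `k × 1` tiles. -/
def IsTiling (m n k : ℕ) (T : Finset (Finset (ℕ × ℕ))) : Prop :=
  (∀ t ∈ T, IsHTile k t ∨ IsVTile k t) ∧
  (T : Set (Finset (ℕ × ℕ))).PairwiseDisjoint id ∧
  T.biUnion id = grid m n

/-- The number of tilings of the `m × n` rectangle by `k × 1` tiles. -/
noncomputable def numTilings (m n k : ℕ) : ℕ :=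
  Nat.card {T : Finset (Finset (ℕ × ℕ)) // IsTiling m n k T}

/-- The tiling `T` has a fault at `x = a`: every tile lies entirely in
columns `< a` or entirely in columns `≥ a`. -/
def HasFaultAt (T : Finset (Finset (ℕ × ℕ))) (a : ℕ) : Prop :=
  ∀ t ∈ T, (∀ c ∈ t, c.2 < a) ∨ (∀ c ∈ t, a ≤ c.2)

/-- A tiling of a rectangle with `n` columns is fault-free. -/
def FaultFree (n : ℕ) (T : Finset (Finset (ℕ × ℕ))) : Prop :=
  ∀ a : ℕ, 0 < a → a < n → ¬ HasFaultAt T a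

/-- The number of fault-free tilings of the `m × n` rectangle by `k × 1` tiles. -/
noncomputable def numFFTilings (m n k : ℕ) : ℕ :=
  Nat.card {T : Finset (Finset (ℕ × ℕ)) // IsTiling m n k T ∧ FaultFree n T}

/-!
If column 0 contained no vertical tile, every cell `(r, 0)` would be the left end of a horizontal
tile, so these `m` tiles would fill columns `0, …, k - 1` exactly and the line `x = k` would be a
fault. Two vertical tiles in column 0 would be disjoint and cover `2k > m` of its `m` cells.
-/

def hTile (k i j : ℕ) : Finset (ℕ × ℕ) := (Finset.range k).image fun s => (i, j + s)

def vTile (k i j : ℕ) : Finset (ℕ × ℕ) := (Finset.range k).image fun s => (i + s, j)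

lemma mem_hTile {k i j : ℕ} {c : ℕ × ℕ} : c ∈ hTile k i j ↔ c.1 = i ∧ j ≤ c.2 ∧ c.2 < j + k := by
  obtain ⟨a, b⟩ := c
  simp only [hTile, Finset.mem_image, Finset.mem_range, Prod.mk.injEq]
  constructor
  · rintro ⟨s, hs, rfl, rfl⟩
    omega
  · rintro ⟨rfl, hjb, hbk⟩
    exact ⟨b - j, by omega, rfl, by omega⟩

lemma mem_vTile {k i j : ℕ} {c : ℕ × ℕ} : c ∈ vTile k i j ↔ i ≤ c.1 ∧ c.1 < i + k ∧ c.2 = j := by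
  obtain ⟨a, b⟩ := c
  simp only [vTile, Finset.mem_image, Finset.mem_range, Prod.mk.injEq]
  constructor
  · rintro ⟨s, hs, rfl, rfl⟩
    omega
  · rintro ⟨hia, hak, rfl⟩
    exact ⟨a - i, by omega, by omega, rfl⟩

lemma mem_grid {m n : ℕ} {c : ℕ × ℕ} : c ∈ grid m n ↔ c.1 < m ∧ c.2 < n := by
  simp [grid, Finset.mem_product]

lemma card_vTile (k i j : ℕ) : (vTile k i j).card = k := by
  rw [vTile, Finset.card_image_of_injective _ fun s s' h => by simpa using h, Finset.card_range]

namespace IsTiling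

variable {m n k : ℕ} {T : Finset (Finset (ℕ × ℕ))}

lemma mem_grid_of_mem (hT : IsTiling m n k T) {t : Finset (ℕ × ℕ)} {c : ℕ × ℕ} (ht : t ∈ T)
    (hc : c ∈ t) : c ∈ grid m n :=
  hT.2.2 ▸ Finset.mem_biUnion.mpr ⟨t, ht, hc⟩

lemma exists_mem_of_mem_grid (hT : IsTiling m n k T) {c : ℕ × ℕ} (hc : c ∈ grid m n) :
    ∃ t ∈ T, c ∈ t :=
  Finset.mem_biUnion.mp (hT.2.2 ▸ hc)

lemma eq_of_mem_of_mem (hT : IsTiling m n k T) {t t' : Finset (ℕ × ℕ)} {c : ℕ × ℕ} (ht : t ∈ T)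
    (ht' : t' ∈ T) (hc : c ∈ t) (hc' : c ∈ t') : t = t' := by
  by_contra hne
  exact Finset.disjoint_left.mp (hT.2.1 ht ht' hne) hc hc'

lemma hTile_mem_of_forall_vTile_notMem (hT : IsTiling m n k T) (hno : ∀ i, vTile k i 0 ∉ T)
    (hn : 0 < n) {r : ℕ} (hr : r < m) : hTile k r 0 ∈ T := by
  obtain ⟨t, ht, hrt⟩ := hT.exists_mem_of_mem_grid (c := (r, 0)) (mem_grid.mpr ⟨hr, hn⟩)
  rcases hT.1 t ht with ⟨i, j, rfl⟩ | ⟨i, j, rfl⟩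
  · obtain ⟨rfl, hj, -⟩ := mem_hTile.mp hrt
    obtain rfl : j = 0 := by simpa using hj
    exact ht
  · obtain rfl : j = 0 := (mem_vTile.mp hrt).2.2.symm
    exact absurd ht (hno i)

lemma hasFaultAt_of_forall_hTile_mem (hT : IsTiling m n k T) (hrows : ∀ r < m, hTile k r 0 ∈ T) :
    HasFaultAt T k := by
  intro t ht
  by_cases hright : ∀ c ∈ t, k ≤ c.2
  · exact Or.inr hright
  obtain ⟨c, hct, hck⟩ : ∃ c ∈ t, c.2 < k := by simpa using hright
  have hrow : hTile k c.1 0 ∈ T := hrows _ (mem_grid.mp (hT.mem_grid_of_mem ht hct)).1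
  have hcrow : c ∈ hTile k c.1 0 := mem_hTile.mpr ⟨rfl, Nat.zero_le _, by omega⟩
  obtain rfl := hT.eq_of_mem_of_mem ht hrow hct hcrow
  exact Or.inl fun c' hc' => by simpa using (mem_hTile.mp hc').2.2

lemma exists_vTile_mem_of_faultFree (hT : IsTiling m n k T) (hff : FaultFree n T) (hk : 0 < k)
    (hn : k < n) : ∃ i, vTile k i 0 ∈ T := by
  by_contra! hno
  exact hff k hk hn <| hT.hasFaultAt_of_forall_hTile_mem fun _ =>
    hT.hTile_mem_of_forall_vTile_notMem hno (by omega)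

lemma two_mul_le_of_vTile_mem (hT : IsTiling m n k T) {i i' j : ℕ} (hi : vTile k i j ∈ T)
    (hi' : vTile k i' j ∈ T) (hne : vTile k i j ≠ vTile k i' j) : 2 * k ≤ m := by
  have hcol : ∀ {a}, vTile k a j ∈ T → vTile k a j ⊆ Finset.range m ×ˢ {j} := fun ha c hc =>
    Finset.mem_product.mpr ⟨Finset.mem_range.mpr (mem_grid.mp (hT.mem_grid_of_mem ha hc)).1,
      Finset.mem_singleton.mpr (mem_vTile.mp hc).2.2⟩
  have hdisj : Disjoint (vTile k i j) (vTile k i' j) := hT.2.1 hi hi' hne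
  calc 2 * k = (vTile k i j ∪ vTile k i' j).card := by
        rw [Finset.card_union_of_disjoint hdisj, card_vTile, card_vTile, two_mul]
    _ ≤ (Finset.range m ×ˢ {j}).card :=
        Finset.card_le_card (Finset.union_subset (hcol hi) (hcol hi'))
    _ = m := by simp

end IsTiling

theorem stmt_6_general (k m n : ℕ) (h2 : m < 2 * k) (hn : k < n)
    (T : Finset (Finset (ℕ × ℕ))) (hT : IsTiling m n k T) (hff : FaultFree n T) :
    ∃! t : Finset (ℕ × ℕ), t ∈ T ∧
      ∃ i : ℕ, t = (Finset.range k).image fun s => (i + s, 0) := by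
  obtain ⟨i, hi⟩ := hT.exists_vTile_mem_of_faultFree hff (by omega) hn
  refine ⟨vTile k i 0, ⟨hi, i, rfl⟩, ?_⟩
  rintro _ ⟨hi', i', rfl⟩
  by_contra hne
  exact (hT.two_mul_le_of_vTile_mem hi' hi hne).not_gt h2

theorem stmt_6 (k m n : ℕ) (hk : 2 ≤ k) (h1 : k < m) (h2 : m < 2 * k) (hn : k < n)
    (T : Finset (Finset (ℕ × ℕ))) (hT : IsTiling m n k T) (hff : FaultFree n T) :
    ∃! t : Finset (ℕ × ℕ), t ∈ T ∧
      ∃ i : ℕ, t = (Finset.range k).image fun s => (i + s, 0) :=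
  stmt_6_general k m n h2 hn T hT hff
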